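/- Anderson impurity model: fix N ≥ 1 and work with 2N qubits, where qubits 0,…,N−1 are the spin-up sites and qubits N,…,2N−1 are the spin-down sites, qubits 0 and N being the impurity orbitals. Let S_AIM = {→X_0X_i, →Y_0Y_i : 1 ≤ i ≤ N−1} ∪ {→X_NX_{N+i}, →Y_NY_{N+i} : 1 ≤ i ≤ N−1} ∪ {Z_0Z_N} (the Pauli strings of the Jordan–Wigner transform of the Anderson impurity model with nonzero hybridizations V_i and nonzero interaction U). Then dim g(S_AIM) ≥ 2^(N−1). -/

import Mathlib

open Matrix

attribute [local instance 100] LieRing.ofAssociativeRing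

/-- The four 2×2 Pauli matrices: identity, X, Y, Z. -/
noncomputable def pauli : Fin 4 → Matrix (Fin 2) (Fin 2) ℂ
  | 0 => 1
  | 1 => !![0, 1; 1, 0]
  | 2 => !![0, -Complex.I; Complex.I, 0]
  | 3 => !![1, 0; 0, -1]

/-- The matrix of an `n`-qubit Pauli string `p : Fin n → Fin 4`,
the Kronecker product of the `pauli (p i)`. -/
noncomputable def PauliMat {n : ℕ} (p : Fin n → Fin 4) :
    Matrix (Fin n → Fin 2) (Fin n → Fin 2) ℂ :=
  Matrix.of fun x y => ∏ i, pauli (p i) (x i) (y i)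

/-- The Hamiltonian algebra of a set of Pauli strings: the Lie ℝ-subalgebra of the
complex matrices generated by `{I • P(p) : p ∈ S}`. -/
noncomputable def hamAlg {n : ℕ} (S : Set (Fin n → Fin 4)) :
    LieSubalgebra ℝ (Matrix (Fin n → Fin 2) (Fin n → Fin 2) ℂ) :=
  LieSubalgebra.lieSpan ℝ _ ((fun p => Complex.I • PauliMat p) '' S)

/-- The Pauli string `→A_iB_j`: letter `A` at `i`, letter `B` at `j`, `Z` strictly
between `i` and `j`, identity elsewhere. -/
def ladderString {n : ℕ} (i j : Fin n) (A B : Fin 4) : Fin n → Fin 4 :=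
  fun k => if k = i then A else if k = j then B
    else if min i j < k ∧ k < max i j then 3 else 0

/-- The Pauli string `Z_kZ_l`. -/
def zzString {n : ℕ} (k l : Fin n) : Fin n → Fin 4 :=
  fun m => if m = k ∨ m = l then 3 else 0

/-- The Pauli string `Z_k`. -/
def zString {n : ℕ} (k : Fin n) : Fin n → Fin 4 :=
  fun m => if m = k then 3 else 0

/-- A choice of letter: `X` if `c = 0`, `Y` if `c = 1`. -/
def ltr (c : Fin 2) : Fin 4 := if c = 0 then 1 else 2

/-- The opposite letter: `Y` if `c = 0`, `X` if `c = 1`. -/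
def ltrBar (c : Fin 2) : Fin 4 := if c = 0 then 2 else 1

/-- Pauli strings of the Jordan–Wigner transformed hopping terms of one spin species,
with sites embedded via `v : Fin N → Fin (2N)` and hoppings on the edges of `G`. -/
def Sspin {N : ℕ} (G : SimpleGraph (Fin N)) (v : Fin N → Fin (2 * N)) :
    Set (Fin (2 * N) → Fin 4) :=
  {p | ∃ k l : Fin N, G.Adj k l ∧
    (p = ladderString (v k) (v l) 1 1 ∨ p = ladderString (v k) (v l) 2 2)}

/-- Pauli strings of the Jordan–Wigner transformed free fermion model. -/
def Sfree {N : ℕ} (G : SimpleGraph (Fin N)) (u d : Fin N → Fin (2 * N)) :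
    Set (Fin (2 * N) → Fin 4) :=
  Sspin G u ∪ Sspin G d

/-- Pauli strings of the model with a single on-site Coulomb interaction at fermion
site `i0` (interaction term `Z_{u i0} Z_{d i0}`). -/
def Sint {N : ℕ} (G : SimpleGraph (Fin N)) (u d : Fin N → Fin (2 * N)) (i0 : Fin N) :
    Set (Fin (2 * N) → Fin 4) :=
  Sfree G u d ∪ {zzString (u i0) (d i0)}

/-- Pauli strings of the Jordan–Wigner transformed Anderson impurity model on `2N`
qubits: hybridization strings between the impurity qubits `0` (spin up) and `N`
(spin down) and the bath qubits, plus the interaction string `Z_0 Z_N`. -/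
def S_AIM (N : ℕ) (hN : 1 ≤ N) : Set (Fin (2 * N) → Fin 4) :=
  {p | ∃ i : ℕ, ∃ _h1 : 1 ≤ i, ∃ h2 : i < N,
      p = ladderString (⟨0, by omega⟩ : Fin (2 * N)) ⟨i, by omega⟩ 1 1 ∨
      p = ladderString (⟨0, by omega⟩ : Fin (2 * N)) ⟨i, by omega⟩ 2 2 ∨
      p = ladderString (⟨N, by omega⟩ : Fin (2 * N)) ⟨N + i, by omega⟩ 1 1 ∨
      p = ladderString (⟨N, by omega⟩ : Fin (2 * N)) ⟨N + i, by omega⟩ 2 2} ∪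
  {zzString (⟨0, by omega⟩ : Fin (2 * N)) ⟨N, by omega⟩}

/-!
Pauli strings are linearly independent, so it suffices to find `2^(N-1)` distinct Pauli strings `P`
with `i P ∈ g(S_AIM)`. If `P` and `Q` anticommute, `⁅i P, i Q⁆` is a nonzero real multiple of
`i P Q`, and `P Q` is a Pauli string up to a phase. For `N ≥ 2`, start from `X_N X_{N+1} ∈ S_AIM`
and bracket successively with `Z_0 Z_N`, `→X_0X_j` and `→Y_0Y_j`: each bracket anticommutes at
exactly one site, and the three together multiply by `Z_N Z_j` up to phase. This puts
`Z_V σ_N X_{N+1}` (with `σ ∈ {X, Y}`) in the algebra for every `V ⊆ {1, …, N-1}`. For `N = 1` the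
generator `Z_0 Z_1` alone suffices.
-/

open Finset

/-- With `X, Y, Z` numbered `1, 2, 3`, the letter of `σ_a σ_b` is `a ^^^ b`; this is its phase. -/
noncomputable def letterPhase (a b : Fin 4) : ℂ :=
  if (a = 1 ∧ b = 2) ∨ (a = 2 ∧ b = 3) ∨ (a = 3 ∧ b = 1) then Complex.I
  else if (a = 2 ∧ b = 1) ∨ (a = 3 ∧ b = 2) ∨ (a = 1 ∧ b = 3) then -Complex.I
  else 1

abbrev LettersAnticommute (a b : Fin 4) : Prop := a ≠ b ∧ a ≠ 0 ∧ b ≠ 0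

theorem pauli_mul_pauli (a b : Fin 4) : pauli a * pauli b = letterPhase a b • pauli (a ^^^ b) := by
  fin_cases a <;> fin_cases b <;>
    · ext i j
      fin_cases i <;> fin_cases j <;>
        simp [pauli, letterPhase, Matrix.mul_apply, Fin.sum_univ_two]

theorem letterPhase_self (a : Fin 4) : letterPhase a a = 1 := by
  fin_cases a <;> simp [letterPhase]

theorem letterPhase_swap (a b : Fin 4) :
    letterPhase b a = (if LettersAnticommute a b then -1 else 1) * letterPhase a b := by
  fin_cases a <;> fin_cases b <;> simp [letterPhase, LettersAnticommute]

theorem letterPhase_sq (a b : Fin 4) :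
    letterPhase a b ^ 2 = if LettersAnticommute a b then -1 else 1 := by
  fin_cases a <;> fin_cases b <;> simp [letterPhase]

theorem letter_xor_eq_zero_iff {a b : Fin 4} : a ^^^ b = 0 ↔ a = b := by
  revert a b; decide

theorem sum_diag_pauli (a : Fin 4) : ∑ t, pauli a t t = if a = 0 then 2 else 0 := by
  fin_cases a <;> simp [pauli, Fin.sum_univ_two]

variable {n : ℕ}

def stringMul (p q : Fin n → Fin 4) : Fin n → Fin 4 := fun k => p k ^^^ q k

def anticommSites (p q : Fin n → Fin 4) : Finset (Fin n) :=
  univ.filter fun k => LettersAnticommute (p k) (q k)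

theorem stringMul_comm (p q : Fin n → Fin 4) : stringMul p q = stringMul q p :=
  funext fun _ => Fin.xor_comm _ _

theorem stringMul_eq_zero_iff {p q : Fin n → Fin 4} : stringMul p q = 0 ↔ p = q := by
  simp only [funext_iff, stringMul, Pi.zero_apply, letter_xor_eq_zero_iff]

theorem PauliMat_mul (p q : Fin n → Fin 4) :
    PauliMat p * PauliMat q = (∏ k, letterPhase (p k) (q k)) • PauliMat (stringMul p q) := by
  ext x y
  simp only [Matrix.mul_apply, PauliMat, Matrix.of_apply, Matrix.smul_apply, smul_eq_mul,
    ← prod_mul_distrib]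
  rw [← Fintype.prod_sum fun k t => pauli (p k) (x k) t * pauli (q k) t (y k)]
  simp only [← Matrix.mul_apply, pauli_mul_pauli, Matrix.smul_apply, smul_eq_mul, prod_mul_distrib,
    stringMul]

theorem trace_PauliMat (r : Fin n → Fin 4) : (PauliMat r).trace = if r = 0 then 2 ^ n else 0 := by
  simp only [Matrix.trace, Matrix.diag, PauliMat, Matrix.of_apply]
  rw [← Fintype.prod_sum fun k t => pauli (r k) t t]
  simp only [sum_diag_pauli]
  split_ifs with hr
  · simp [hr]
  · obtain ⟨k, hk⟩ := Function.ne_iff.mp hr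
    exact prod_eq_zero (mem_univ k) (if_neg hk)

theorem trace_PauliMat_mul (p q : Fin n → Fin 4) :
    (PauliMat p * PauliMat q).trace = if p = q then 2 ^ n else 0 := by
  rw [PauliMat_mul, Matrix.trace_smul, trace_PauliMat]
  simp only [stringMul_eq_zero_iff]
  split_ifs with h
  · simp [h, letterPhase_self]
  · rw [smul_zero]

theorem linearIndependent_PauliMat : LinearIndependent ℂ (PauliMat (n := n)) := by
  let B : LinearMap.BilinForm ℂ (Matrix (Fin n → Fin 2) (Fin n → Fin 2) ℂ) :=
    (LinearMap.mul ℂ _).compr₂ (Matrix.traceLinearMap _ ℂ ℂ)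
  refine LinearMap.BilinForm.linearIndependent_of_iIsOrtho (B := B) (fun p q hpq => ?_) fun p => ?_
  · simp [Function.onFun, B, trace_PauliMat_mul, hpq]
  · simp [B, trace_PauliMat_mul]

theorem linearIndependent_I_smul_PauliMat :
    LinearIndependent ℝ fun p : Fin n → Fin 4 => Complex.I • PauliMat p :=
  (linearIndependent_PauliMat.units_smul fun _ => Units.mk0 Complex.I Complex.I_ne_zero
    ).restrict_scalars' ℝ

theorem prod_letterPhase_swap (p q : Fin n → Fin 4) :
    ∏ k, letterPhase (q k) (p k) = (-1) ^ #(anticommSites p q) * ∏ k, letterPhase (p k) (q k) := by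
  rw [prod_congr rfl fun k _ => letterPhase_swap (p k) (q k), prod_mul_distrib, prod_ite,
    prod_const, prod_const, one_pow, mul_one, anticommSites]

theorem prod_letterPhase_sq (p q : Fin n → Fin 4) :
    (∏ k, letterPhase (p k) (q k)) ^ 2 = (-1) ^ #(anticommSites p q) := by
  simp only [← prod_pow, letterPhase_sq, prod_ite, prod_const, one_pow, mul_one, anticommSites]

/-- Since `Q P = -P Q`, `⁅i P, i Q⁆ = -2 P Q`; and `(P Q)² = -1` forces the phase of `P Q` to be
`± i`. -/
theorem exists_lie_I_smul_PauliMat_eq {p q : Fin n → Fin 4} (hodd : Odd #(anticommSites p q)) :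
    ∃ c : ℝ, c ≠ 0 ∧ ⁅Complex.I • PauliMat p, Complex.I • PauliMat q⁆ =
      c • Complex.I • PauliMat (stringMul p q) := by
  have hlie : ⁅Complex.I • PauliMat p, Complex.I • PauliMat q⁆ =
      (-2 * ∏ k, letterPhase (p k) (q k)) • PauliMat (stringMul p q) := by
    rw [Ring.lie_def, smul_mul_smul_comm, smul_mul_smul_comm, PauliMat_mul, PauliMat_mul,
      prod_letterPhase_swap p q, hodd.neg_one_pow, stringMul_comm q p, smul_smul, smul_smul,
      ← sub_smul, Complex.I_mul_I]
    ring_nf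
  have hΦ :
      ∏ k, letterPhase (p k) (q k) = Complex.I ∨ ∏ k, letterPhase (p k) (q k) = -Complex.I := by
    refine sq_eq_sq_iff_eq_or_eq_neg.mp ?_
    rw [prod_letterPhase_sq, hodd.neg_one_pow, Complex.I_sq]
  rcases hΦ with hΦ | hΦ
  · exact ⟨-2, by norm_num, by rw [hlie, hΦ, ← smul_assoc, Complex.real_smul]; push_cast; ring_nf⟩
  · exact ⟨2, by norm_num, by rw [hlie, hΦ, ← smul_assoc, Complex.real_smul]; push_cast; ring_nf⟩

section LieSubalgebra

variable {L : LieSubalgebra ℝ (Matrix (Fin n → Fin 2) (Fin n → Fin 2) ℂ)}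

theorem I_smul_PauliMat_stringMul_mem {p q : Fin n → Fin 4} (hp : Complex.I • PauliMat p ∈ L)
    (hq : Complex.I • PauliMat q ∈ L) (hodd : Odd #(anticommSites p q)) :
    Complex.I • PauliMat (stringMul p q) ∈ L := by
  obtain ⟨c, hc, hlie⟩ := exists_lie_I_smul_PauliMat_eq hodd
  have hmem := L.smul_mem c⁻¹ (L.lie_mem hp hq)
  rwa [hlie, smul_smul, inv_mul_cancel₀ hc, one_smul] at hmem

theorem card_le_finrank_of_I_smul_PauliMat_mem {T : Finset (Fin n → Fin 4)}
    (hT : ∀ p ∈ T, Complex.I • PauliMat p ∈ L) : #T ≤ Module.finrank ℝ L := by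
  have hli : LinearIndependent ℝ fun p : T => Complex.I • PauliMat (p : Fin n → Fin 4) :=
    linearIndependent_I_smul_PauliMat.comp _ Subtype.val_injective
  have hspan : Submodule.span ℝ (Set.range fun p : T => Complex.I • PauliMat (p : Fin n → Fin 4))
      ≤ L.toSubmodule :=
    Submodule.span_le.mpr (Set.range_subset_iff.mpr fun p => hT p p.2)
  calc #T = Module.finrank ℝ (Submodule.span ℝ _) := by
        rw [finrank_span_eq_card hli, Fintype.card_coe]
    _ ≤ Module.finrank ℝ L.toSubmodule := Submodule.finrank_mono hspan

end LieSubalgebra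

theorem I_smul_PauliMat_mem_hamAlg {S : Set (Fin n → Fin 4)} {p : Fin n → Fin 4} (hp : p ∈ S) :
    Complex.I • PauliMat p ∈ hamAlg S :=
  LieSubalgebra.subset_lieSpan (Set.mem_image_of_mem _ hp)

theorem ladderString_apply {a b : ℕ} (ha : a < n) (hb : b < n) (hab : a < b) (A B : Fin 4)
    (k : Fin n) :
    ladderString (⟨a, ha⟩ : Fin n) ⟨b, hb⟩ A B k =
      if k.val = a then A else if k.val = b then B else if a < k.val ∧ k.val < b then 3 else 0 := by
  have hab' : (⟨a, ha⟩ : Fin n) ≤ ⟨b, hb⟩ := Fin.mk_le_mk.mpr hab.le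
  simp [ladderString, min_eq_left hab', max_eq_right hab', Fin.ext_iff, Fin.lt_def]

theorem zzString_apply {a b : ℕ} (ha : a < n) (hb : b < n) (k : Fin n) :
    zzString (⟨a, ha⟩ : Fin n) ⟨b, hb⟩ k = if k.val = a ∨ k.val = b then 3 else 0 := by
  simp [zzString, Fin.ext_iff]

/-- `Z_V σ_N X_{N+1}`, where `σ` is `X` or `Y` according to the parity of `#V`. -/
def aimString (N : ℕ) (V : Finset ℕ) : Fin (2 * N) → Fin 4 := fun k =>
  if k.val ∈ V then 3
  else if k.val = N then (if Even #V then 1 else 2)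
  else if k.val = N + 1 then 1 else 0

section InsertStep

variable {N j : ℕ} {V : Finset ℕ}

theorem anticommSites_aimString_zzString (hV : V ⊆ Ico 1 N) (hN : 1 ≤ N) :
    anticommSites (aimString N V) (zzString (⟨0, by omega⟩ : Fin (2 * N)) ⟨N, by omega⟩) =
      {⟨N, by omega⟩} := by
  ext ⟨m, hm⟩
  have hVm : m ∈ V → 1 ≤ m ∧ m < N := fun h => mem_Ico.mp (hV h)
  simp only [anticommSites, mem_filter, mem_univ, true_and, mem_singleton, Fin.ext_iff,
    zzString_apply, aimString]
  split_ifs <;> grind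

theorem anticommSites_stringMul_ladderString_X (hV : V ⊆ Ico 1 N) (hj1 : 1 ≤ j) (hjN : j < N)
    (hjV : j ∉ V) :
    anticommSites
        (stringMul (aimString N V) (zzString (⟨0, by omega⟩ : Fin (2 * N)) ⟨N, by omega⟩))
        (ladderString (⟨0, by omega⟩ : Fin (2 * N)) ⟨j, by omega⟩ 1 1) =
      {⟨0, by omega⟩} := by
  ext ⟨m, hm⟩
  have hVm : m ∈ V → 1 ≤ m ∧ m < N := fun h => mem_Ico.mp (hV h)
  simp only [anticommSites, mem_filter, mem_univ, true_and, mem_singleton, Fin.ext_iff, stringMul,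
    zzString_apply, ladderString_apply _ _ hj1, aimString]
  split_ifs <;> grind

theorem anticommSites_stringMul_ladderString_Y (hV : V ⊆ Ico 1 N) (hj1 : 1 ≤ j) (hjN : j < N)
    (hjV : j ∉ V) :
    anticommSites
        (stringMul
          (stringMul (aimString N V) (zzString (⟨0, by omega⟩ : Fin (2 * N)) ⟨N, by omega⟩))
          (ladderString (⟨0, by omega⟩ : Fin (2 * N)) ⟨j, by omega⟩ 1 1))
        (ladderString (⟨0, by omega⟩ : Fin (2 * N)) ⟨j, by omega⟩ 2 2) =
      {⟨j, by omega⟩} := by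
  ext ⟨m, hm⟩
  have hVm : m ∈ V → 1 ≤ m ∧ m < N := fun h => mem_Ico.mp (hV h)
  simp only [anticommSites, mem_filter, mem_univ, true_and, mem_singleton, Fin.ext_iff, stringMul,
    zzString_apply, ladderString_apply _ _ hj1, aimString]
  split_ifs <;> grind

theorem stringMul_aimString_insert (hV : V ⊆ Ico 1 N) (hj1 : 1 ≤ j) (hjN : j < N)
    (hjV : j ∉ V) :
    stringMul
        (stringMul
          (stringMul (aimString N V) (zzString (⟨0, by omega⟩ : Fin (2 * N)) ⟨N, by omega⟩))
          (ladderString (⟨0, by omega⟩ : Fin (2 * N)) ⟨j, by omega⟩ 1 1))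
        (ladderString (⟨0, by omega⟩ : Fin (2 * N)) ⟨j, by omega⟩ 2 2) =
      aimString N (insert j V) := by
  funext ⟨m, hm⟩
  have hVm : m ∈ V → 1 ≤ m ∧ m < N := fun h => mem_Ico.mp (hV h)
  simp only [stringMul, zzString_apply, ladderString_apply _ _ hj1, aimString, mem_insert,
    card_insert_of_notMem hjV, Nat.even_add_one]
  split_ifs <;> grind

end InsertStep

theorem aimString_empty {N : ℕ} (hN : 2 ≤ N) :
    aimString N ∅ = ladderString (⟨N, by omega⟩ : Fin (2 * N)) ⟨N + 1, by omega⟩ 1 1 := by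
  funext ⟨m, hm⟩
  simp only [aimString, ladderString_apply _ _ (Nat.lt_succ_self N), notMem_empty, card_empty]
  split_ifs <;> grind

theorem aimString_injOn (N : ℕ) : Set.InjOn (aimString N) ↑(Ico 1 N).powerset := by
  intro V hV W hW h
  simp only [coe_powerset, Set.mem_preimage, Set.mem_powerset_iff, coe_subset] at hV hW
  ext m
  by_cases hm : m < N
  · have hm' := congrFun h ⟨m, by omega⟩
    simp only [aimString] at hm'
    split_ifs at hm' <;> grind
  · constructor <;> intro h' <;> grind

theorem I_smul_PauliMat_aimString_mem_hamAlg {N : ℕ} (hN : 2 ≤ N) {V : Finset ℕ}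
    (hV : V ⊆ Ico 1 N) : Complex.I • PauliMat (aimString N V) ∈ hamAlg (S_AIM N (by omega)) := by
  induction V using Finset.induction_on with
  | empty =>
    rw [aimString_empty hN]
    exact I_smul_PauliMat_mem_hamAlg (Or.inl ⟨1, le_rfl, hN, Or.inr (Or.inr (Or.inl rfl))⟩)
  | insert j V hjV ih =>
    obtain ⟨hj1, hjN⟩ := mem_Ico.mp (hV (mem_insert_self j V))
    have hV' : V ⊆ Ico 1 N := (subset_insert j V).trans hV
    have hZZ := I_smul_PauliMat_mem_hamAlg (S := S_AIM N (by omega))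
      (p := zzString ⟨0, by omega⟩ ⟨N, by omega⟩) (Or.inr rfl)
    have hX := I_smul_PauliMat_mem_hamAlg (S := S_AIM N (by omega))
      (p := ladderString ⟨0, by omega⟩ ⟨j, by omega⟩ 1 1) (Or.inl ⟨j, hj1, hjN, Or.inl rfl⟩)
    have hY := I_smul_PauliMat_mem_hamAlg (S := S_AIM N (by omega))
      (p := ladderString ⟨0, by omega⟩ ⟨j, by omega⟩ 2 2)
      (Or.inl ⟨j, hj1, hjN, Or.inr (Or.inl rfl)⟩)
    have h1 := I_smul_PauliMat_stringMul_mem (ih hV') hZZ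
      (by simp [anticommSites_aimString_zzString hV' (by omega : 1 ≤ N)])
    have h2 := I_smul_PauliMat_stringMul_mem h1 hX
      (by simp [anticommSites_stringMul_ladderString_X hV' hj1 hjN hjV])
    have h3 := I_smul_PauliMat_stringMul_mem h2 hY
      (by simp [anticommSites_stringMul_ladderString_Y hV' hj1 hjN hjV])
    rwa [stringMul_aimString_insert hV' hj1 hjN hjV] at h3

/-- The Hamiltonian algebra of the Anderson impurity model has dimension at least
`2^(N−1)`. -/
theorem finrank_hamAlg_AIM_ge (N : ℕ) (hN : 1 ≤ N) :
    2 ^ (N - 1) ≤ Module.finrank ℝ (hamAlg (S_AIM N hN)) := by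
  rcases hN.eq_or_lt with rfl | hN2
  · simpa using card_le_finrank_of_I_smul_PauliMat_mem (T := {zzString (0 : Fin 2) 1})
      (by simpa using I_smul_PauliMat_mem_hamAlg (Or.inr rfl))
  · calc 2 ^ (N - 1) = #((Ico 1 N).powerset.image (aimString N)) := by
          rw [card_image_of_injOn (aimString_injOn N), card_powerset, Nat.card_Ico]
      _ ≤ _ := card_le_finrank_of_I_smul_PauliMat_mem (by
          simpa using fun V hV => I_smul_PauliMat_aimString_mem_hamAlg hN2 hV)
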